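/- Assume moreover c < f − D. There exists ε₀* > 0 (depending only on f, D, Δ, c, η, K₀) such that for all 0 < ε₀ < ε₀* and all 0 < ε < ε₀, in the Phase‑1 setting one has n_aB(t) ≤ n_aA(t)·n_AB(t) for all t ∈ [0, T₁]. -/

import Mathlib

noncomputable section
namespace NB

open Real Set Filter

/-- A state of the six-dimensional system; coordinates 0..5 stand for
the genotypes aa, aA, AA, aB, AB, BB respectively. -/
abbrev State := Fin 6 → ℝ

/-- Σ3 = n_aa + n_aA + n_AA. -/
def S3 (n : State) : ℝ := n 0 + n 1 + n 2
/-- Σ5 = n_aA + n_AA + n_aB + n_AB + n_BB. -/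
def S5 (n : State) : ℝ := n 1 + n 2 + n 3 + n 4 + n 5
/-- Σ6 = n_aa + n_aA + n_AA + n_aB + n_AB + n_BB. -/
def S6 (n : State) : ℝ := n 0 + n 1 + n 2 + n 3 + n 4 + n 5

/-- Birth rates (with Lean's convention x/0 = 0). -/
def birth (f : ℝ) (n : State) : State :=
  ![ f * n 0 * (n 0 + n 1 / 2) / S3 n
      + f * (n 3 / 2) * (n 1 / 2 + n 3 / 2) / S5 n
      + f * (n 1 / 2) * (n 0 + n 1 / 2 + n 3 / 2) / S6 n,
    f * n 0 * (n 1 / 2 + n 2) / S3 n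
      + f * ((n 1 / 2) * (n 3 / 2 + n 4 / 2) + (n 3 / 2) * (n 2 + n 4)) / S5 n
      + f * ((n 1 / 2 + n 2) * (n 0 + n 1 + n 3 / 2) + (n 1 / 4) * n 4) / S6 n,
    f * (n 4 / 2) * (n 1 / 2 + n 2 + n 4 / 2) / S5 n
      + f * (n 1 / 2 + n 2) * (n 1 / 2 + n 2 + n 4 / 2) / S6 n,
    f * (n 1 / 2 + n 3) * (n 3 / 2 + n 4 / 2 + n 5) / S5 n
      + f * (n 1 / 2) * (n 3 / 2 + n 4 / 2 + n 5) / S6 n,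
    f * (n 1 / 2 + n 2 + n 4) * (n 3 / 2 + n 4 / 2 + n 5) / S5 n
      + f * (n 1 / 2 + n 2) * (n 3 / 2 + n 4 / 2 + n 5) / S6 n,
    f * ((n 3 + n 4 + 2 * n 5) ^ 2 / 4) / S5 n ]

/-- Death rates. -/
def death (D Δ c η : ℝ) (n : State) : State :=
  ![ n 0 * (D + Δ + c * S3 n),
    n 1 * (D + c * (n 0 + n 1 + n 2 + n 3 + n 4) + (c - η) * n 5),
    n 2 * (D + c * S6 n),
    n 3 * (D - Δ + c * S5 n),
    n 4 * (D - Δ + c * S5 n),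
    n 5 * (D - Δ + (c - η) * n 1 + c * (n 2 + n 3 + n 4 + n 5)) ]

/-- The vector field F = b − d. -/
def F (f D Δ c η : ℝ) (n : State) : State :=
  fun i => birth f n i - death D Δ c η n i

/-- n̄_a = (f − D − Δ)/c. -/
def nbar_a (f D Δ c : ℝ) : ℝ := (f - D - Δ) / c
/-- n̄_A = (f − D)/c. -/
def nbar_A (f D c : ℝ) : ℝ := (f - D) / c
/-- n̄_B = (f − D + Δ)/c. -/
def nbar_B (f D Δ c : ℝ) : ℝ := (f - D + Δ) / c

/-- p_A = (0,0,n̄_A,0,0,0). -/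
def pA (f D c : ℝ) : State := ![0, 0, nbar_A f D c, 0, 0, 0]
/-- p_B = (0,0,0,0,0,n̄_B). -/
def pB (f D Δ c : ℝ) : State := ![0, 0, 0, 0, 0, nbar_B f D Δ c]
/-- p_aB = (n̄_a,0,0,0,0,n̄_B). -/
def paB (f D Δ c : ℝ) : State := ![nbar_a f D Δ c, 0, 0, 0, 0, nbar_B f D Δ c]

/-- A solution of the system on a set I: a differentiable curve with
n'(t) = F(n(t)), nonnegative coordinates and Σ3 > 0, Σ5 > 0 on I. -/
def IsSolution (f D Δ c η : ℝ) (I : Set ℝ) (n : ℝ → State) : Prop :=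
  ∀ t ∈ I,
    (∀ i, HasDerivAt (fun s => n s i) (F f D Δ c η (n t) i) t) ∧
    (∀ i, 0 ≤ n t i) ∧ 0 < S3 (n t) ∧ 0 < S5 (n t)

/-- The set of times at which the total B/aA/aa perturbation has reached level ε₀. -/
def hitSet (ε₀ : ℝ) (n : ℝ → State) : Set ℝ :=
  {t : ℝ | 0 ≤ t ∧ ε₀ ≤ n t 0 + n t 1 + n t 3 + n t 4 + n t 5}

/-- T₁ = inf{t ≥ 0 : n_aa + n_aA + n_aB + n_AB + n_BB ≥ ε₀}. -/
def T1 (ε₀ : ℝ) (n : ℝ → State) : ℝ := sInf (hitSet ε₀ n)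

/-- Phase‑1 initial condition: n_aA(0) = ε, k₁·ε² ≤ n_aa(0) ≤ ε²,
n̄_A − C₀·ε ≤ n_AA(0) ≤ n̄_A, n_AB(0) = ε³, n_aB(0) = 0, n_BB(0) = 0. -/
def Phase1Init (f D c : ℝ) (k₁ C₀ ε : ℝ) (n : ℝ → State) : Prop :=
  n 0 1 = ε ∧ k₁ * ε ^ 2 ≤ n 0 0 ∧ n 0 0 ≤ ε ^ 2 ∧
  nbar_A f D c - C₀ * ε ≤ n 0 2 ∧ n 0 2 ≤ nbar_A f D c ∧
  n 0 4 = ε ^ 3 ∧ n 0 3 = 0 ∧ n 0 5 = 0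

/-!
Let `h = n_aA n_AB - n_aB`, so `h(0) = ε⁴ > 0`. Before `T₁` the population is close to the pure
AA equilibrium with `n̄_A > 1`. There the aA class grows at rate `O(ε₀)`, because its matings
with AA already give birth rate about `f`, and aA × AB matings produce AB at rate at least
`f n_aA n_AB / (4 Σ5)`, which beats the aB births because `n_AA ≥ 1`. As long as `h ≥ 0` this
gives `h' ≥ -(D - Δ + 2 c n̄_A) h`, and an exponential barrier keeps `h` positive on `[0, T₁]`.
-/

open Topology

theorem pos_of_neg_mul_le_deriv {g g' : ℝ → ℝ} {a b L : ℝ} (hg : ContinuousOn g (Icc a b))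
    (hg' : ∀ x ∈ Ico a b, HasDerivWithinAt g (g' x) (Ici x) x) (ha : 0 < g a)
    (bound : ∀ x ∈ Ico a b, 0 < g x → -L * g x ≤ g' x) : ∀ ⦃x⦄, x ∈ Icc a b → 0 < g x := by
  -- `-g` stays below the barrier `B`, which satisfies `B' = -(L + 1) B`
  obtain ⟨B, hB_def⟩ : ∃ B : ℝ → ℝ, B = fun x => -(g a / 2) * exp (-(L + 1) * (x - a)) :=
    ⟨_, rfl⟩
  have hB_neg : ∀ x, B x < 0 := fun x => by
    rw [hB_def]
    exact mul_neg_of_neg_of_pos (by linarith) (exp_pos _)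
  have hB : ∀ x, HasDerivAt B (-(L + 1) * B x) x := fun x => by
    rw [hB_def]
    refine ((((hasDerivAt_id x).sub_const a).const_mul (-(L + 1))).exp.const_mul
      (-(g a / 2))).congr_deriv ?_
    simp only [id]
    ring
  have hle := image_le_of_deriv_right_lt_deriv_boundary hg.neg (fun x hx => (hg' x hx).neg)
    (by simp [hB_def]; linarith) hB fun x hx hcontact => by
      rw [Pi.neg_apply, neg_eq_iff_eq_neg] at hcontact
      have := bound x hx (hcontact ▸ neg_pos.mpr (hB_neg x))
      rw [hcontact] at this
      linarith [hB_neg x]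
  intro x hx
  linarith [Pi.neg_apply g x ▸ hle hx, hB_neg x]

theorem mul_le_F_aA {f D Δ c η ε : ℝ} {m : State} (hf : 0 ≤ f) (hc : 0 ≤ c) (hη : 0 ≤ η)
    (hm : ∀ i, 0 ≤ m i) (hAA : 1 ≤ m 2) (he : m 0 + m 1 + m 3 + m 4 + m 5 ≤ ε) :
    m 1 * (f * (1 - ε) - D - c * (m 2 + ε)) ≤ F f D Δ c η m 1 := by
  have h0 := hm 0; have h1 := hm 1; have h3 := hm 3; have h4 := hm 4; have h5 := hm 5
  have hε : 0 ≤ ε := by linarith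
  have hS6 : 0 < S6 m := by unfold S6; linarith
  have hS3 : 0 ≤ f * m 0 * (m 1 / 2 + m 2) / S3 m := by unfold S3; positivity
  have hS5 : 0 ≤ f * ((m 1 / 2) * (m 3 / 2 + m 4 / 2) + (m 3 / 2) * (m 2 + m 4)) / S5 m := by
    unfold S5; positivity
  have hmate : f * (1 - ε) * m 1
      ≤ f * ((m 1 / 2 + m 2) * (m 0 + m 1 + m 3 / 2) + (m 1 / 4) * m 4) / S6 m := by
    rw [le_div_iff₀ hS6]
    unfold S6
    have hrest : 0 ≤ f * ((m 1 / 2) * (m 0 + m 1 + m 3 / 2) + m 2 * (m 0 + m 3 / 2)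
        + m 1 / 4 * m 4) := by positivity
    nlinarith [mul_nonneg (mul_nonneg hf h1) (mul_nonneg hε (by linarith : 0 ≤ m 2 - 1)),
      mul_nonneg (mul_nonneg hf h1) (mul_nonneg hε (by linarith : 0 ≤ m 0 + m 1 + m 3 + m 4 + m 5)),
      mul_nonneg (mul_nonneg hf h1) (by linarith : 0 ≤ ε - (m 0 + m 1 + m 3 + m 4 + m 5))]
  have hdeath : m 1 * (D + c * (m 0 + m 1 + m 2 + m 3 + m 4) + (c - η) * m 5)
      ≤ m 1 * (D + c * (m 2 + ε)) := by
    apply mul_le_mul_of_nonneg_left _ h1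
    nlinarith [mul_nonneg hη h5]
  show _ ≤ birth f m 1 - death D Δ c η m 1
  simp only [birth, death, Matrix.cons_val_one, Matrix.cons_val_zero]
  linarith

theorem le_mul_F_AB_sub_F_aB {f D Δ c η : ℝ} {m : State} (hf : 0 ≤ f)
    (hm : ∀ i, 0 ≤ m i) (hS5 : 0 < S5 m) (hAA : 1 ≤ m 2) (hh : m 3 ≤ m 1 * m 4) :
    f * (m 1 * m 4) / (4 * S5 m) - (D - Δ + c * S5 m) * (m 1 * m 4 - m 3)
      ≤ m 1 * F f D Δ c η m 4 - F f D Δ c η m 3 := by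
  have h1 := hm 1; have h3 := hm 3; have h4 := hm 4; have h5 := hm 5
  set P := m 3 / 2 + m 4 / 2 + m 5 with hP
  set r := m 1 * (m 2 + m 1 / 2 - 1 / 2) with hr_def
  have hsplit : m 1 * F f D Δ c η m 4 - F f D Δ c η m 3
      = f * P * (r + (m 1 * m 4 - m 3)) / S5 m + f * P * r / S6 m
        - (D - Δ + c * S5 m) * (m 1 * m 4 - m 3) := by
    simp only [F, birth, death, Matrix.cons_val]
    ring
  have hr : m 1 / 2 ≤ r := by nlinarith [mul_nonneg h1 (by linarith : 0 ≤ m 2 + m 1 / 2 - 1)]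
  have hS5_term : f * (m 1 * m 4) / (4 * S5 m) ≤ f * P * (r + (m 1 * m 4 - m 3)) / S5 m := by
    rw [div_le_div_iff₀ (by positivity) hS5]
    nlinarith [mul_nonneg hf (mul_nonneg (by linarith : 0 ≤ P - m 4 / 2) (by linarith : 0 ≤ r)),
      mul_nonneg hf (mul_nonneg (by linarith : 0 ≤ P) (by linarith : 0 ≤ m 1 * m 4 - m 3)),
      mul_nonneg hf (mul_nonneg h4 (by linarith : 0 ≤ r - m 1 / 2))]
  have hS6_term : 0 ≤ f * P * r / S6 m := by
    have : 0 ≤ S6 m := by unfold S6; linarith [hm 0, hm 2]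
    have : 0 ≤ P := by positivity
    have : 0 ≤ r := by linarith
    positivity
  rw [hsplit]
  linarith

theorem neg_mul_le_deriv_aA_mul_AB_sub_aB {f D Δ c η K₀ ε₀ : ℝ} {m : State} (hf : 0 ≤ f)
    (hc : 0 < c) (hη : 0 ≤ η) (hm : ∀ i, 0 ≤ m i) (hS5 : 0 < S5 m)
    (he : m 0 + m 1 + m 3 + m 4 + m 5 ≤ ε₀) (hAA : |m 2 - nbar_A f D c| ≤ K₀ * ε₀)
    (hsmall₁ : K₀ * ε₀ ≤ nbar_A f D c - 1) (hsmall₂ : (K₀ + 1) * ε₀ ≤ nbar_A f D c)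
    (hsmall₃ : (f + c * (K₀ + 1)) * ε₀ ≤ f / (8 * nbar_A f D c)) (hh : m 3 ≤ m 1 * m 4) :
    -(D - Δ + 2 * c * nbar_A f D c) * (m 1 * m 4 - m 3)
      ≤ F f D Δ c η m 1 * m 4 + m 1 * F f D Δ c η m 4 - F f D Δ c η m 3 := by
  set nb := nbar_A f D c
  obtain ⟨hAA_lo, hAA_hi⟩ := abs_le.mp hAA
  have h0 := hm 0; have h1 := hm 1; have h4 := hm 4
  have hnb : 0 < nb := by linarith
  have hcnb : c * nb = f - D := mul_div_cancel₀ _ hc.ne'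
  have hS5_le : S5 m ≤ 2 * nb := by unfold S5; linarith
  have hbirth : -(f / (8 * nb)) * m 1 ≤ F f D Δ c η m 1 := by
    refine le_trans ?_ (mul_le_F_aA hf hc.le hη hm (by linarith) he)
    rw [mul_comm]
    exact mul_le_mul_of_nonneg_left (by nlinarith) h1
  have hfS5 : f * (m 1 * m 4) / (8 * nb) ≤ f * (m 1 * m 4) / (4 * S5 m) :=
    div_le_div_of_nonneg_left (by positivity) (by positivity) (by linarith)
  have hdeath : (D - Δ + c * S5 m) * (m 1 * m 4 - m 3) ≤ (D - Δ + 2 * c * nb) * (m 1 * m 4 - m 3) :=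
    mul_le_mul_of_nonneg_right (by nlinarith) (by linarith)
  have hAB := le_mul_F_AB_sub_F_aB (D := D) (Δ := Δ) (c := c) (η := η) hf hm hS5
    (by linarith) hh
  have haA := mul_le_mul_of_nonneg_right hbirth h4
  have hcancel : f * (m 1 * m 4) / (8 * nb) = f / (8 * nb) * m 1 * m 4 := by ring
  linarith

theorem perturbation_lt_of_lt_T1 {ε₀ t : ℝ} {n : ℝ → State} (ht₀ : 0 ≤ t) (ht : t < T1 ε₀ n) :
    n t 0 + n t 1 + n t 3 + n t 4 + n t 5 < ε₀ := by
  by_contra! h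
  exact ht.not_ge (csInf_le ⟨0, fun s hs => hs.1⟩ ⟨ht₀, h⟩)

theorem stmt10_general (f D Δ c η K₀ : ℝ)
    (hΔ : 0 < Δ) (hΔD : Δ < D) (hc : 0 < c)
    (hη0 : 0 ≤ η) (hcfD : c < f - D) :
    ∃ ε₀star > (0 : ℝ), ∀ ε₀ : ℝ, 0 < ε₀ → ε₀ < ε₀star →
      ∀ ε : ℝ, 0 < ε → ε < ε₀ →
      ∀ k₁ C₀ : ℝ, 0 < k₁ → 0 < C₀ →
      ∀ n : ℝ → State, IsSolution f D Δ c η (Set.Ici 0) n →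
        Phase1Init f D c k₁ C₀ ε n →
        (∀ t ∈ Set.Icc (0 : ℝ) (T1 ε₀ n), |n t 2 - nbar_A f D c| ≤ K₀ * ε₀) →
        ∀ t ∈ Set.Icc (0 : ℝ) (T1 ε₀ n), n t 3 ≤ n t 1 * n t 4 := by
  set nb := nbar_A f D c
  have hnb : 1 < nb := (one_lt_div hc).mpr hcfD
  have hf : 0 < f := by linarith
  have hlin : ∀ κ u : ℝ, 0 < u → ∀ᶠ x in 𝓝[>] (0 : ℝ), κ * x ≤ u := fun κ u hu =>
    nhdsWithin_le_nhds <| ((continuous_const_mul κ).tendsto 0).eventually_le_const (by simpa using hu)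
  have hsmall := (hlin K₀ (nb - 1) (by linarith)).and <| (hlin (K₀ + 1) nb (by linarith)).and <|
    hlin (f + c * (K₀ + 1)) (f / (8 * nb)) (by positivity)
  obtain ⟨ε₀star, hε₀star, hsub⟩ := mem_nhdsGT_iff_exists_Ioo_subset.mp hsmall
  refine ⟨ε₀star, hε₀star, fun ε₀ hε₀ hlt ε hε _ k₁ C₀ _ _ n hsol hinit hAA => ?_⟩
  obtain ⟨hsmall₁, hsmall₂, hsmall₃⟩ := hsub ⟨hε₀, hlt⟩
  obtain ⟨haA, -, -, -, -, hAB, haB, -⟩ := hinit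
  have hderiv : ∀ s ∈ Ici (0 : ℝ), HasDerivAt (fun s => n s 1 * n s 4 - n s 3)
      (F f D Δ c η (n s) 1 * n s 4 + n s 1 * F f D Δ c η (n s) 4 - F f D Δ c η (n s) 3) s :=
    fun s hs => (((hsol s hs).1 1).mul ((hsol s hs).1 4)).sub ((hsol s hs).1 3)
  intro t ht
  have := pos_of_neg_mul_le_deriv (L := D - Δ + 2 * c * nb)
    (fun s hs => (hderiv s hs.1).continuousAt.continuousWithinAt)
    (fun s hs => (hderiv s hs.1).hasDerivWithinAt) (by simp [haA, hAB, haB]; positivity)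
    (fun s hs hpos => neg_mul_le_deriv_aA_mul_AB_sub_aB hf.le hc hη0 (hsol s hs.1).2.1
      (hsol s hs.1).2.2.2 (perturbation_lt_of_lt_T1 hs.1 hs.2).le (hAA s (Ico_subset_Icc_self hs))
      hsmall₁ hsmall₂ hsmall₃ (by linarith)) ht
  linarith

/-- In the Phase‑1 setting, for ε₀ small enough: n_aB ≤ n_aA·n_AB on [0, T₁]. -/
theorem stmt10 (f D Δ c η K₀ : ℝ)
    (hΔ : 0 < Δ) (hΔD : Δ < D) (hDf : D < f) (hc : 0 < c)
    (hη0 : 0 ≤ η) (hηc : η < c) (hcfD : c < f - D) (hK₀ : 0 < K₀) :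
    ∃ ε₀star > (0 : ℝ), ∀ ε₀ : ℝ, 0 < ε₀ → ε₀ < ε₀star →
      ∀ ε : ℝ, 0 < ε → ε < ε₀ →
      ∀ k₁ C₀ : ℝ, 0 < k₁ → 0 < C₀ →
      ∀ n : ℝ → State, IsSolution f D Δ c η (Set.Ici 0) n →
        Phase1Init f D c k₁ C₀ ε n →
        (∀ t ∈ Set.Icc (0 : ℝ) (T1 ε₀ n), |n t 2 - nbar_A f D c| ≤ K₀ * ε₀) →
        ∀ t ∈ Set.Icc (0 : ℝ) (T1 ε₀ n), n t 3 ≤ n t 1 * n t 4 :=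
  stmt10_general f D Δ c η K₀ hΔ hΔD hc hη0 hcfD

end NB
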